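/- arXiv:1003.4413 — 4 statements merged into one kernel-verified Lean document; each statement's English description precedes it below -/
import Mathlib

section
/- Let Q be a finite set partitioned into triples with cyclic orders and w the Neumann-Zagier pairing. Let Z = { y : Q → ℝ | for every triple σ, ∑_{q ∈ σ} y(q) = 0 }. Then for every y ∈ Z and every q₁ ∈ Q, ∑_{q, q₂ ∈ Q} w(q₁,q)·w(q,q₂)·y(q₂) = -3·y(q₁). -/
/-- The Neumann-Zagier pairing associated to a partition of `Q` into cyclically
ordered triples, encoded by the successor map `n`. -/
def NZw {Q : Type*} [DecidableEq Q] (n : Q → Q) (q q' : Q) : ℝ :=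
  if n q = q' then 1 else if n q' = q then -1 else 0

/-- Identity (3.2): if `y` sums to zero on each triple, then
`∑_{q,q₂} w(q₁,q) w(q,q₂) y(q₂) = -3 y(q₁)`. -/
theorem NZw_comp_apply {Q : Type*} [Fintype Q] [DecidableEq Q]
    (n : Q → Q) (h3 : ∀ q, n (n (n q)) = q) (hne : ∀ q, n q ≠ q)
    (y : Q → ℝ) (hy : ∀ q, y q + y (n q) + y (n (n q)) = 0) (q₁ : Q) :
    ∑ q, ∑ q₂, NZw n q₁ q * NZw n q q₂ * y q₂ = -3 * y q₁ := by
  have hinj : Function.Injective n := by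
    intro a b h
    calc a = n (n (n a)) := (h3 a).symm
    _ = n (n (n b)) := by rw [h]
    _ = b := h3 b
  have aux : ∀ (f : Q → ℝ) (q : Q),
      ∑ q₂, NZw n q q₂ * f q₂ = f (n q) - f (n (n q)) := by
    intro f q
    have key : ∀ q₂, NZw n q q₂ * f q₂ =
        (if n q = q₂ then f q₂ else 0) - (if n (n q) = q₂ then f q₂ else 0) := by
      intro q₂
      unfold NZw
      by_cases h1 : n q = q₂
      · have h2 : n (n q) ≠ q₂ := by
          intro h2; exact hne q (hinj (h2.trans h1.symm))
        simp [h1, h2, hne]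
      · by_cases h2 : n (n q) = q₂
        · have hq : n q₂ = q := by rw [← h2, h3]
          simp [h1, h2, hq]
        · have hq : n q₂ ≠ q := by
            intro hq
            exact h2 (hinj (hinj (by rw [h3, hq])))
          simp [h1, h2, hq]
    simp only [key, Finset.sum_sub_distrib, Finset.sum_ite_eq, Finset.mem_univ, if_true]
  have step : ∀ q, ∑ q₂, NZw n q₁ q * NZw n q q₂ * y q₂
      = NZw n q₁ q * (y (n q) - y (n (n q))) := by
    intro q
    rw [← aux y q, Finset.mul_sum]
    simp [mul_assoc]
  simp only [step]
  rw [aux (fun q => y (n q) - y (n (n q))) q₁]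
  simp only [h3]
  have := hy q₁
  linarith
end

section
/- Let V be a finite-dimensional real vector space and let f₁, ..., fₙ, g be linear functionals on V such that for all x ∈ V, ∑_{i=1}^{n} fᵢ(x)·ln|fᵢ(x)| = g(x) (with the convention 0·ln 0 = 0). Then for each index i with fᵢ ≠ 0, there exists an index j ≠ i and a real number λ such that fᵢ = λ·fⱼ. -/
/-!
Suppose `fᵢ ≠ 0` is proportional to no other `fⱼ`. Then each `fⱼ` with `j ≠ i` is either zero
or does not vanish identically on `ker fᵢ`, and since a real vector space is not a finite union
of proper subspaces, some `x ∈ ker fᵢ` has `fⱼ x ≠ 0` for all the latter. Take `v` with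
`fᵢ v = 1`. On the line `x + t • v` the hypothesis reads `t ln|t| + S t = g x + t g v`, where
every term of `S` is either zero or `s ln|s|` composed with an affine map that is nonzero at
`t = 0`; so `S` is differentiable at `0`, whereas `t ln|t|` is not.
-/

open Real

theorem LinearMap.exists_eq_smul_of_ker_le {𝕜 E : Type*} [Field 𝕜] [AddCommGroup E] [Module 𝕜 E]
    {φ ψ : E →ₗ[𝕜] 𝕜} (h : ker φ ≤ ker ψ) : ∃ c : 𝕜, ψ = c • φ := by
  have hψ : ψ ∈ Submodule.span 𝕜 (Set.range fun _ : Unit => φ) :=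
    mem_span_of_iInf_ker_le_ker (by simpa using h)
  rw [Set.range_const, Submodule.mem_span_singleton] at hψ
  obtain ⟨c, hc⟩ := hψ
  exact ⟨c, hc.symm⟩

theorem Real.not_differentiableAt_mul_log_abs_zero :
    ¬ DifferentiableAt ℝ (fun t => t * log |t|) 0 := by
  simpa only [log_abs] using not_DifferentiableAt_log_mul_zero

theorem not_differentiableAt_of_mul_log_abs_add_eq_affine {S : ℝ → ℝ} {α β : ℝ}
    (h : ∀ t, t * log |t| + S t = α + t * β) : ¬ DifferentiableAt ℝ S 0 := by
  intro hS
  have hsplit : (fun t => t * log |t|) = fun t => α + t * β - S t :=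
    funext fun t => eq_sub_of_add_eq (h t)
  exact not_differentiableAt_mul_log_abs_zero (hsplit ▸ by fun_prop)

theorem DifferentiableAt.mul_log_abs {f : ℝ → ℝ} {s : ℝ} (hf : DifferentiableAt ℝ f s)
    (hs : f s ≠ 0) : DifferentiableAt ℝ (fun t => f t * Real.log |f t|) s := by
  simpa only [log_abs] using hf.fun_mul (hf.log hs)

theorem linear_sum_xlogx_proportional_general
    {V : Type*} [AddCommGroup V] [Module ℝ V]
    {m : ℕ} (f : Fin m → (V →ₗ[ℝ] ℝ)) (g : V →ₗ[ℝ] ℝ)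
    (h : ∀ x : V, ∑ i, f i x * Real.log |f i x| = g x) :
    ∀ i : Fin m, f i ≠ 0 → ∃ j : Fin m, j ≠ i ∧ ∃ l : ℝ, f i = l • f j := by
  intro i hfi
  by_contra! hcon
  obtain ⟨v, hv⟩ := LinearMap.surjective_of_ne_zero hfi 1
  obtain ⟨x, hxi, hx⟩ := Module.Dual.exists_forall_mem_ne_zero_of_forall_exists
    (LinearMap.ker (f i)) (fun j : {j // ∃ y ∈ LinearMap.ker (f i), f j y ≠ 0} => f j) Subtype.prop
  have hterm (j : Fin m) (hj : j ≠ i) :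
      DifferentiableAt ℝ (fun t : ℝ => f j (x + t • v) * log |f j (x + t • v)|) 0 := by
    by_cases hker : ∃ y ∈ LinearMap.ker (f i), f j y ≠ 0
    · exact DifferentiableAt.mul_log_abs (by simp only [map_add, map_smul]; fun_prop)
        (by simpa using hx ⟨j, hker⟩)
    · push Not at hker
      obtain ⟨c, hc⟩ := LinearMap.exists_eq_smul_of_ker_le hker
      obtain rfl : c = 0 := by
        by_contra hc0
        exact hcon j hj c⁻¹ (by rw [hc, smul_smul, inv_mul_cancel₀ hc0, one_smul])
      simp [hc]
  have hline (t : ℝ) : t * log |t| +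
      ∑ j ∈ Finset.univ.erase i, f j (x + t • v) * log |f j (x + t • v)| = g x + t * g v := by
    have hfi_line : f i (x + t • v) = t := by simp [LinearMap.mem_ker.mp hxi, hv]
    have hsum := h (x + t • v)
    rw [← Finset.add_sum_erase _ _ (Finset.mem_univ i), hfi_line] at hsum
    simpa only [map_add g, map_smul g, smul_eq_mul] using hsum
  exact not_differentiableAt_of_mul_log_abs_add_eq_affine hline
    (DifferentiableAt.fun_sum fun j hj => hterm j (Finset.ne_of_mem_erase hj))

/-- Lemma 4.3: if a finite sum `∑ᵢ fᵢ(x) ln|fᵢ(x)|` of linear functionals composed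
with `t ↦ t ln|t|` is itself a linear functional `g`, then each nonzero `fᵢ` is
proportional to some `fⱼ` with `j ≠ i`. (Here `Real.log 0 = 0`, so
`t * Real.log |t|` vanishes at `t = 0`.) -/
theorem linear_sum_xlogx_proportional
    {V : Type*} [AddCommGroup V] [Module ℝ V] [FiniteDimensional ℝ V]
    {m : ℕ} (f : Fin m → (V →ₗ[ℝ] ℝ)) (g : V →ₗ[ℝ] ℝ)
    (h : ∀ x : V, ∑ i, f i x * Real.log |f i x| = g x) :
    ∀ i : Fin m, f i ≠ 0 → ∃ j : Fin m, j ≠ i ∧ ∃ l : ℝ, f i = l • f j :=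
  linear_sum_xlogx_proportional_general f g h
end

section
/- The Lobachevsky function Λ(t) = -∫₀ᵗ ln|2 sin s| ds satisfies Λ(t + π) = Λ(t) for all real t (it is periodic with period π). -/
/-- The Lobachevsky (Milnor) function. -/
noncomputable def lobachevsky (t : ℝ) : ℝ :=
  -∫ s in (0:ℝ)..t, Real.log |2 * Real.sin s|

/-!
The integrand `log |2 sin s|` is `π`-periodic and, being the logarithm of an analytic function,
locally integrable. By Euler's evaluation `∫₀^π log (sin s) = -π log 2` its integral over a
period is `π log 2 - π log 2 = 0`, and a primitive of a periodic function with zero mean over a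
period is itself periodic.
-/

open Real MeasureTheory

theorem Function.Periodic.periodic_intervalIntegral_of_integral_eq_zero {E : Type*}
    [NormedAddCommGroup E] [NormedSpace ℝ E] {f : ℝ → E} {T : ℝ}
    (hf : Function.Periodic f T) (h_int : ∀ a b, IntervalIntegrable f volume a b)
    (h_zero : ∫ x in 0..T, f x = 0) (a : ℝ) :
    Function.Periodic (fun t => ∫ x in a..t, f x) T := fun t => by
  dsimp only
  rw [hf.intervalIntegral_add_eq_add a t h_int, hf.intervalIntegral_add_eq a 0, zero_add, h_zero,
    add_zero]

theorem Real.periodic_log_abs_two_mul_sin : Function.Periodic (fun s => log |2 * sin s|) π :=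
  fun s => by simp only [sin_add_pi, mul_neg, abs_neg]

theorem Real.intervalIntegrable_log_abs_two_mul_sin (a b : ℝ) :
    IntervalIntegrable (fun s => log |2 * sin s|) volume a b := by
  simp only [log_abs]
  exact (analyticOnNhd_const.mul analyticOnNhd_sin).meromorphicOn.intervalIntegrable_log

theorem Real.integral_log_abs_two_mul_sin_zero_pi : ∫ s in 0..π, log |2 * sin s| = 0 := by
  have h_split : Set.EqOn (fun s => log |2 * sin s|) (fun s => log 2 + log (sin s))
      (Set.Ioo 0 π) := fun s hs => by
    dsimp only
    rw [log_abs, log_mul two_ne_zero (sin_pos_of_pos_of_lt_pi hs.1 hs.2).ne']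
  rw [intervalIntegral.integral_congr_Ioo_of_le pi_pos.le h_split,
    intervalIntegral.integral_add (g := fun s => log (sin s)) intervalIntegrable_const
      intervalIntegrable_log_sin,
    integral_log_sin_zero_pi]
  simp only [intervalIntegral.integral_const, sub_zero, smul_eq_mul]
  ring

/-- The Lobachevsky function is periodic with period `π`. -/
theorem lobachevsky_periodic (t : ℝ) :
    lobachevsky (t + Real.pi) = lobachevsky t := by
  unfold lobachevsky
  exact congrArg Neg.neg <|
    periodic_log_abs_two_mul_sin.periodic_intervalIntegral_of_integral_eq_zero
      intervalIntegrable_log_abs_two_mul_sin integral_log_abs_two_mul_sin_zero_pi 0 t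
end

section
/- Let Q be a finite set partitioned into triples with cyclic orders, E a finite set, and i : E × Q → ℕ an incidence function. Define W(e,q) = ∑_{q' ∈ Q} i(e,q')·w(q',q) where w is the Neumann-Zagier pairing. Suppose that for all e, e' ∈ E, ∑_{q,q' ∈ Q} i(e,q)·i(e',q')·w(q,q') = 0 (Neumann-Zagier's relation). Then for any x, y : E → ℝ, the vectors A*(x), A*(y) : Q → ℝ defined by A*(x)(q) = (1/3)·∑_{e ∈ E} W(e,q)·x(e) satisfy w(A*(x), A*(y)) = 0, where w(u,v) = ∑_{q,q'} w(q,q')·u(q)·v(q'). -/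
section aux
variable {Q : Type*} [Fintype Q] [DecidableEq Q]

lemma NZ_inj {Q : Type*} (n : Q → Q) (h3 : ∀ q, n (n (n q)) = q) :
    Function.Injective n :=
  Function.LeftInverse.injective (g := fun q => n (n q)) h3

lemma NZ_sum_left (n : Q → Q) (h3 : ∀ q, n (n (n q)) = q) (hne : ∀ q, n q ≠ q)
    (a : Q) (g : Q → ℝ) :
    ∑ q, NZw n a q * g q = g (n a) - g (n (n a)) := by
  have hinj := NZ_inj n h3
  have hd : n a ≠ n (n a) := fun h => hne (n a) h.symm
  have key : ∀ q, NZw n a q * g q =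
      (if q = n a then g q else 0) + (if q = n (n a) then -g q else 0) := by
    intro q
    unfold NZw
    by_cases h1 : n a = q
    · have h2 : q ≠ n (n a) := by rw [← h1]; exact hd
      rw [if_pos h1, if_pos h1.symm, if_neg h2]; ring
    · by_cases h2 : n q = a
      · have hq : q = n (n a) := by rw [← h2, h3 q]
        have hq' : q ≠ n a := by
          intro h; subst h
          exact hne a ((h3 a).symm.trans (congrArg n h2)).symm
        rw [if_neg h1, if_pos h2, if_neg hq', if_pos hq]; ring
      · have hq1 : q ≠ n a := fun h => h1 h.symm
        have hq2 : q ≠ n (n a) := by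
          intro h; apply h2; rw [h, h3 a]
        rw [if_neg h1, if_neg h2, if_neg hq1, if_neg hq2]; ring
  rw [Finset.sum_congr rfl (fun q _ => key q), Finset.sum_add_distrib,
    Finset.sum_ite_eq' Finset.univ (n a) g,
    Finset.sum_ite_eq' Finset.univ (n (n a)) (fun q => -g q)]
  simp [sub_eq_add_neg]

lemma NZ_triple (n : Q → Q) (h3 : ∀ q, n (n (n q)) = q) (hne : ∀ q, n q ≠ q)
    (a b : Q) :
    ∑ q, ∑ q', NZw n a q * NZw n q q' * NZw n b q' = 3 * NZw n a b := by
  have hinj := NZ_inj n h3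
  have key : ∀ q, ∑ q', NZw n a q * NZw n q q' * NZw n b q'
      = NZw n a q * (NZw n q (n b) - NZw n q (n (n b))) := by
    intro q
    have h := NZ_sum_left n h3 hne b (fun q' => NZw n q q')
    calc ∑ q', NZw n a q * NZw n q q' * NZw n b q'
        = NZw n a q * ∑ q', NZw n b q' * NZw n q q' := by
          rw [Finset.mul_sum]; exact Finset.sum_congr rfl (fun _ _ => by ring)
      _ = NZw n a q * (NZw n q (n b) - NZw n q (n (n b))) := by rw [h]
  rw [Finset.sum_congr rfl (fun q _ => key q),
    NZ_sum_left n h3 hne a (fun q => NZw n q (n b) - NZw n q (n (n b)))]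
  -- now a pointwise identity on NZw values
  have c1 : n (n a) = n b ↔ n a = b := ⟨fun h => hinj h, fun h => by rw [h]⟩
  have c2 : n (n b) = n a ↔ n b = a := ⟨fun h => hinj h, fun h => by rw [h]⟩
  have c3 : n (n a) = n (n b) ↔ a = b :=
    ⟨fun h => hinj (hinj h), fun h => by rw [h]⟩
  have c4 : n (n (n b)) = n a ↔ n a = b :=
    ⟨fun h => by rw [← h, h3], fun h => by rw [h3, ← h]⟩
  have c5 : n (n (n a)) = n b ↔ n b = a :=
    ⟨fun h => by rw [← h, h3], fun h => by rw [h3, ← h]⟩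
  have c6 : n (n b) = n (n a) ↔ a = b :=
    ⟨fun h => (hinj (hinj h)).symm, fun h => by rw [h]⟩
  have c7 : n (n (n a)) = n (n b) ↔ n a = b :=
    ⟨fun h => hinj (hinj h), fun h => by rw [h]⟩
  have c8 : n (n (n b)) = n (n a) ↔ n b = a :=
    ⟨fun h => hinj (hinj h), fun h => by rw [h]⟩
  have f1 : ¬(n a = b ∧ n b = a) := by
    rintro ⟨h1, h2⟩
    have : n (n (n a)) = n a := by rw [h1, h2, h1]
    exact hne a ((h3 a).symm.trans this).symm
  have f2 : a = b → ¬ n a = b := fun h h' => hne a (h'.trans h.symm)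
  have f3 : a = b → ¬ n b = a := fun h h' => hne b (h'.trans h)
  simp only [NZw, c1, c2, c3, c4, c5, c6, c7, c8]
  by_cases hP : n a = b <;> by_cases hQ : n b = a <;> by_cases hR : a = b
  · exact absurd ⟨hP, hQ⟩ f1
  · exact absurd ⟨hP, hQ⟩ f1
  · exact absurd hP (f2 hR)
  · simp [hP, hQ, hR, hne a, hne b]; try ring
  · exact absurd hQ (f3 hR)
  · simp [hP, hQ, hR, hne a, hne b]; try ring
  · simp [hP, hQ, hR, hne a, hne b]; try ring
  · simp [hP, hQ, hR, hne a, hne b]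

lemma swap4 {Q : Type*} [Fintype Q] {E : Type*} [Fintype E] (F : Q → Q → E → E → ℝ) :
    ∑ q, ∑ q', ∑ e, ∑ f, F q q' e f = ∑ e, ∑ f, ∑ q, ∑ q', F q q' e f := by
  calc ∑ q, ∑ q', ∑ e, ∑ f, F q q' e f
      = ∑ q, ∑ e, ∑ q', ∑ f, F q q' e f :=
        Finset.sum_congr rfl fun q _ => Finset.sum_comm
    _ = ∑ e, ∑ q, ∑ q', ∑ f, F q q' e f := Finset.sum_comm
    _ = ∑ e, ∑ q, ∑ f, ∑ q', F q q' e f :=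
        Finset.sum_congr rfl fun e _ => Finset.sum_congr rfl fun q _ => Finset.sum_comm
    _ = ∑ e, ∑ f, ∑ q, ∑ q', F q q' e f :=
        Finset.sum_congr rfl fun e _ => Finset.sum_comm

lemma expand_prod {E : Type*} [Fintype E] (c : ℝ) (A B : E → ℝ) :
    (∑ e, A e) * (∑ f, B f) * c = ∑ e, ∑ f, A e * B f * c := by
  rw [Finset.sum_mul_sum, Finset.sum_mul]
  exact Finset.sum_congr rfl fun e _ => Finset.sum_mul _ _ _

lemma Tlem (n : Q → Q) (h3 : ∀ q, n (n (n q)) = q) (hne : ∀ q, n q ≠ q)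
    (c d : Q → ℝ) :
    ∑ q, ∑ q', (∑ a, c a * NZw n a q) * NZw n q q' * (∑ b, d b * NZw n b q')
      = 3 * ∑ a, ∑ b, c a * d b * NZw n a b := by
  calc ∑ q, ∑ q', (∑ a, c a * NZw n a q) * NZw n q q' * (∑ b, d b * NZw n b q')
      = ∑ q, ∑ q', ∑ a, ∑ b, c a * d b * (NZw n a q * NZw n q q' * NZw n b q') := by
        refine Finset.sum_congr rfl fun q _ => Finset.sum_congr rfl fun q' _ => ?_
        rw [show (∑ a, c a * NZw n a q) * NZw n q q' * (∑ b, d b * NZw n b q')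
            = (∑ a, c a * NZw n a q) * (∑ b, d b * NZw n b q') * NZw n q q' by ring,
          expand_prod]
        exact Finset.sum_congr rfl fun a _ => Finset.sum_congr rfl fun b _ => by ring
    _ = ∑ a, ∑ b, ∑ q, ∑ q', c a * d b * (NZw n a q * NZw n q q' * NZw n b q') :=
        swap4 _
    _ = ∑ a, ∑ b, c a * d b * (3 * NZw n a b) := by
        refine Finset.sum_congr rfl fun a _ => Finset.sum_congr rfl fun b _ => ?_
        simp only [← Finset.mul_sum]
        rw [NZ_triple n h3 hne]
    _ = 3 * ∑ a, ∑ b, c a * d b * NZw n a b := by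
        simp only [Finset.mul_sum]
        exact Finset.sum_congr rfl fun a _ =>
          Finset.sum_congr rfl fun b _ => by ring

end aux

/-- If the incidence function `i` satisfies the Neumann-Zagier relation
`∑_{q,q'} i(e,q) i(e',q') w(q,q') = 0` for all edges `e, e'`, then the image of
`A* : ℝ^E → ℝ^Q`, `A*(x)(q) = (1/3) ∑_e W(e,q) x(e)` with
`W(e,q) = ∑_{q'} i(e,q') w(q',q)`, is isotropic for `w`:
`w(A*(x), A*(y)) = 0`. -/
theorem NZ_Astar_isotropic {Q : Type*} [Fintype Q] [DecidableEq Q]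
    {E : Type*} [Fintype E]
    (n : Q → Q) (h3 : ∀ q, n (n (n q)) = q) (hne : ∀ q, n q ≠ q)
    (i : E → Q → ℕ)
    (hrel : ∀ e e' : E,
      ∑ q, ∑ q', (i e q : ℝ) * (i e' q' : ℝ) * NZw n q q' = 0)
    (x y : E → ℝ) :
    ∑ q, ∑ q', NZw n q q' *
        ((1 / 3) * ∑ e, (∑ q'', (i e q'' : ℝ) * NZw n q'' q) * x e) *
        ((1 / 3) * ∑ e, (∑ q'', (i e q'' : ℝ) * NZw n q'' q') * y e) = 0 := by
  calc ∑ q, ∑ q', NZw n q q' *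
        ((1 / 3) * ∑ e, (∑ q'', (i e q'' : ℝ) * NZw n q'' q) * x e) *
        ((1 / 3) * ∑ e, (∑ q'', (i e q'' : ℝ) * NZw n q'' q') * y e)
      = ∑ q, ∑ q', ∑ e, ∑ f, (1/9) * x e * y f *
          ((∑ q'', (i e q'' : ℝ) * NZw n q'' q) * NZw n q q' *
            (∑ q'', (i f q'' : ℝ) * NZw n q'' q')) := by
        refine Finset.sum_congr rfl fun q _ => Finset.sum_congr rfl fun q' _ => ?_
        rw [show NZw n q q' *
            ((1 / 3) * ∑ e, (∑ q'', (i e q'' : ℝ) * NZw n q'' q) * x e) *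
            ((1 / 3) * ∑ e, (∑ q'', (i e q'' : ℝ) * NZw n q'' q') * y e)
            = (∑ e, (∑ q'', (i e q'' : ℝ) * NZw n q'' q) * x e) *
              (∑ f, (∑ q'', (i f q'' : ℝ) * NZw n q'' q') * y f) *
              ((1/9) * NZw n q q') by ring,
          expand_prod]
        exact Finset.sum_congr rfl fun e _ => Finset.sum_congr rfl fun f _ => by ring
    _ = ∑ e, ∑ f, ∑ q, ∑ q', (1/9) * x e * y f *
          ((∑ q'', (i e q'' : ℝ) * NZw n q'' q) * NZw n q q' *
            (∑ q'', (i f q'' : ℝ) * NZw n q'' q')) := swap4 _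
    _ = 0 := by
        refine Finset.sum_eq_zero fun e _ => Finset.sum_eq_zero fun f _ => ?_
        simp only [← Finset.mul_sum]
        rw [Tlem n h3 hne (fun a => (i e a : ℝ)) (fun b => (i f b : ℝ)), hrel e f]
        ring
end
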